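/- Let μ be a k-AD-regular measure on ℝⁿ with regularity constant D, let x ∈ supp μ, r > 0, and let E₁, E₂ ⊆ ℝⁿ be Borel sets. Let λ, η ∈ (0,1) with 4η < λ, and set M := ⌈ log((1−2η)/(1−λ/2)) / log(1/(1−η)) ⌉. Then there exists a radius s with (1−λ/2)r ≤ s ≤ (1−2η)r such that all three of the following hold: μ(B(x, s/(1−η)) \ B(x,s)) ≤ (3/M) μ(B(x,(1−η)r) \ B(x,(1−λ)r)); μ(E₁ ∩ (B(x, s/(1−η)) \ B(x,s))) ≤ (3/M) μ(E₁ ∩ (B(x,(1−η)r) \ B(x,(1−λ)r))); and the same inequality with E₂ in place of E₁. Moreover λ/(2η) − 2 ≤ M ≤ λ/η + 1. -/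

import Mathlib

/-!
The radii `s j = (1 - λ/2) r (1 - η)⁻ʲ`, `j < M`, stay below `(1 - 2η) r` by the choice of `M`,
so the annuli `B(x, s (j+1)) \ B(x, s j)` are `M` pairwise disjoint subsets of
`B(x, (1-η)r) \ B(x, (1-λ)r)`. For each of the measures `μ`, `μ|E₁`, `μ|E₂` fewer than `M/3` of
them carry more than a `3/M`-fraction of the large annulus, so one annulus is good for all three.
The bounds on `M` follow from `1 - a⁻¹ ≤ log a ≤ a - 1`.
-/

open MeasureTheory Metric
open scoped ENNReal

/-- The support of a measure: points whose every neighborhood has positive measure. -/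
def msupport {E : Type*} [MeasurableSpace E] [PseudoMetricSpace E] (μ : Measure E) : Set E :=
  {x | ∀ ε : ℝ, 0 < ε → 0 < μ (ball x ε)}

/-- `μ` is `k`-AD-regular with constant `D`. -/
def IsADRegular {n : ℕ} (μ : Measure (EuclideanSpace ℝ (Fin n))) (k : ℕ) (D : ℝ) : Prop :=
  ∀ x ∈ msupport μ, ∀ r : ℝ, 0 < r → ENNReal.ofReal r < EMetric.diam (msupport μ) →
    ENNReal.ofReal (D⁻¹ * r ^ k) ≤ μ (closedBall x r) ∧
      μ (closedBall x r) ≤ ENNReal.ofReal (D * r ^ k)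

open Finset in
theorem MeasureTheory.Measure.card_mul_lt_of_forall_lt_measure {X ι : Type*} [MeasurableSpace X]
    {ν : Measure X} {A : ι → Set X} {B : Set X} {F : Finset ι} {m M : ℕ} (hm : m ≠ 0)
    (hM : M ≠ 0) (hA : ∀ i ∈ F, MeasurableSet (A i)) (hdisj : (F : Set ι).PairwiseDisjoint A)
    (hAB : ∀ i ∈ F, A i ⊆ B) (hlarge : ∀ i ∈ F, (m / M : ℝ≥0∞) * ν B < ν (A i)) :
    #F * m < M := by
  rcases F.eq_empty_or_nonempty with rfl | ⟨i₀, hi₀⟩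
  · simpa using Nat.pos_of_ne_zero hM
  have ht : (m / M : ℝ≥0∞) ≠ 0 := by simp [hm]
  have hB0 : ν B ≠ 0 :=
    (pos_of_gt ((hlarge i₀ hi₀).trans_le (measure_mono (hAB i₀ hi₀)))).ne'
  have hBtop : ν B ≠ ∞ := fun h => by
    simpa [h, ENNReal.mul_top ht] using hlarge i₀ hi₀
  have hsum : #F * (m / M : ℝ≥0∞) * ν B < 1 * ν B := calc
    #F * (m / M : ℝ≥0∞) * ν B = ∑ _i ∈ F, (m / M : ℝ≥0∞) * ν B := by
      rw [sum_const, nsmul_eq_mul, mul_assoc]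
    _ < ∑ i ∈ F, ν (A i) := ENNReal.sum_lt_sum_of_nonempty ⟨i₀, hi₀⟩ hlarge
    _ = ν (⋃ i ∈ F, A i) := (measure_biUnion_finset hdisj hA).symm
    _ ≤ 1 * ν B := by rw [one_mul]; exact measure_mono (Set.iUnion₂_subset hAB)
  rw [ENNReal.mul_lt_mul_iff_left hB0 hBtop, ← mul_div_assoc,
    ENNReal.div_lt_iff (Or.inl (by simpa)) (Or.inl (ENNReal.natCast_ne_top M)), one_mul] at hsum
  exact_mod_cast hsum

open Finset in
theorem MeasureTheory.Measure.exists_forall_measure_le_of_pairwise_disjoint {X κ : Type*}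
    [MeasurableSpace X] [Fintype κ] (ν : κ → Measure X) {A : ℕ → Set X} {B : Set X} {M : ℕ}
    (hM : M ≠ 0) (hA : ∀ j, MeasurableSet (A j)) (hdisj : Pairwise (Function.onFun Disjoint A))
    (hAB : ∀ j < M, A j ⊆ B) :
    ∃ j < M, ∀ k, ν k (A j) ≤ (Fintype.card κ / M : ℝ≥0∞) * ν k B := by
  classical
  cases isEmpty_or_nonempty κ
  · exact ⟨0, Nat.pos_of_ne_zero hM, isEmptyElim⟩
  set m := Fintype.card κ
  let bad k := (range M).filter fun j => (m / M : ℝ≥0∞) * ν k B < ν k (A j)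
  have hbad k : #(bad k) * m < M :=
    card_mul_lt_of_forall_lt_measure Fintype.card_ne_zero hM (fun j _ => hA j)
      (hdisj.set_pairwise _) (fun j hj => hAB j (mem_range.1 (mem_filter.1 hj).1))
      (fun j hj => (mem_filter.1 hj).2)
  have hnot_cover : ¬ range M ⊆ univ.biUnion bad := fun hcover => by
    have : M * m < M * m := calc
      M * m = #(range M) * m := by rw [card_range]
      _ ≤ (∑ k, #(bad k)) * m :=
        Nat.mul_le_mul_right _ ((card_le_card hcover).trans card_biUnion_le)
      _ = ∑ k, #(bad k) * m := sum_mul ..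
      _ < ∑ _k : κ, M := sum_lt_sum_of_nonempty univ_nonempty fun k _ => hbad k
      _ = M * m := by rw [sum_const, card_univ, smul_eq_mul, mul_comm]
    exact lt_irrefl _ this
  obtain ⟨j, hj, hgood⟩ := not_subset.1 hnot_cover
  refine ⟨j, mem_range.1 hj, fun k => not_lt.1 fun hlt => hgood ?_⟩
  exact mem_biUnion.2 ⟨k, mem_univ k, mem_filter.2 ⟨hj, hlt⟩⟩

theorem Metric.closedBall_diff_closedBall_eq_preimage_Ioc {X : Type*} [PseudoMetricSpace X]
    (x : X) (a b : ℝ) : closedBall x b \ closedBall x a = (dist · x) ⁻¹' Set.Ioc a b := by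
  ext y
  simp [and_comm]

theorem Monotone.pairwise_disjoint_closedBall_diff_closedBall {X : Type*} [PseudoMetricSpace X]
    {s : ℕ → ℝ} (hs : Monotone s) (x : X) :
    Pairwise (Function.onFun Disjoint fun j => closedBall x (s (j + 1)) \ closedBall x (s j)) :=
  fun i j hij => by
    simpa only [closedBall_diff_closedBall_eq_preimage_Ioc, Order.succ_eq_add_one]
      using (hs.pairwise_disjoint_on_Ioc_succ hij).preimage (dist · x)

namespace Real

variable {lam η : ℝ}

theorem le_log_one_div_one_sub (hη : η < 1) : η ≤ log (1 / (1 - η)) := by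
  have := log_le_sub_one_of_pos (sub_pos.2 hη)
  rw [one_div, log_inv]
  linarith

theorem log_one_div_one_sub_le (hη : η < 1) : log (1 / (1 - η)) ≤ η / (1 - η) := by
  have hη' : 0 < 1 - η := sub_pos.2 hη
  calc log (1 / (1 - η)) ≤ 1 / (1 - η) - 1 := log_le_sub_one_of_pos (by positivity)
    _ = η / (1 - η) := by field_simp; ring

theorem pow_le_of_le_log_div_log {a c : ℝ} {j : ℕ} (ha : 0 < a) (hc : 1 < c)
    (hj : (j : ℝ) ≤ log a / log c) : c ^ j ≤ a :=
  (pow_le_iff_le_log (by linarith) ha).2 ((le_div_iff₀ (log_pos hc)).1 hj)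

theorem log_div_log_one_div_one_sub_le (hη : 0 < η) (hle : 4 * η < lam) (hlam : lam < 1) :
    log ((1 - 2 * η) / (1 - lam / 2)) / log (1 / (1 - η)) ≤ lam / η := by
  have hlam' : 0 < 1 - lam / 2 := by linarith
  have hnum : log ((1 - 2 * η) / (1 - lam / 2)) ≤ lam := calc
    _ ≤ (1 - 2 * η) / (1 - lam / 2) - 1 := log_le_sub_one_of_pos (div_pos (by linarith) hlam')
    _ ≤ lam := by rw [div_sub_one hlam'.ne', div_le_iff₀ hlam']; nlinarith
  exact div_le_div₀ (by linarith) hnum hη (le_log_one_div_one_sub (by linarith))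

theorem le_log_div_log_one_div_one_sub (hη : 0 < η) (hle : 4 * η < lam) (hlam : lam < 1) :
    lam / (2 * η) - 2 ≤ log ((1 - 2 * η) / (1 - lam / 2)) / log (1 / (1 - η)) := by
  have h2η : 0 < 1 - 2 * η := by linarith
  have hlam' : 0 < 1 - lam / 2 := by linarith
  have ha : 0 < (1 - 2 * η) / (1 - lam / 2) := div_pos h2η hlam'
  have hnum : (lam / 2 - 2 * η) / (1 - 2 * η) ≤ log ((1 - 2 * η) / (1 - lam / 2)) := calc
    _ = 1 - ((1 - 2 * η) / (1 - lam / 2))⁻¹ := by field_simp; ring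
    _ ≤ _ := one_sub_inv_le_log_of_pos ha
  calc lam / (2 * η) - 2 = (lam / 2 - 2 * η) / η * 1 := by field_simp
    _ ≤ (lam / 2 - 2 * η) / η * ((1 - η) / (1 - 2 * η)) := by
      gcongr
      · exact div_nonneg (by linarith) hη.le
      · rw [one_le_div h2η]; linarith
    _ = (lam / 2 - 2 * η) / (1 - 2 * η) / (η / (1 - η)) := by field_simp
    _ ≤ _ := div_le_div₀ (log_nonneg ((one_le_div hlam').2 (by linarith))) hnum
      (log_pos (one_lt_one_div (by linarith) (by linarith))) (log_one_div_one_sub_le (by linarith))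

theorem log_div_log_one_div_one_sub_pos (hη : 0 < η) (hle : 4 * η < lam) (hlam : lam < 1) :
    0 < log ((1 - 2 * η) / (1 - lam / 2)) / log (1 / (1 - η)) :=
  (le_log_div_log_one_div_one_sub hη hle hlam).trans_lt'
    (by rw [sub_pos, lt_div_iff₀ (by positivity)]; linarith)

theorem pow_one_div_one_sub_le (hη : 0 < η) (hle : 4 * η < lam) (hlam : lam < 1) {j : ℕ}
    (hj : (j : ℝ) ≤ log ((1 - 2 * η) / (1 - lam / 2)) / log (1 / (1 - η))) :
    (1 - lam / 2) * (1 / (1 - η)) ^ j ≤ 1 - 2 * η := calc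
  _ ≤ (1 - lam / 2) * ((1 - 2 * η) / (1 - lam / 2)) := by
    gcongr
    · linarith
    · exact pow_le_of_le_log_div_log (div_pos (by linarith) (by linarith))
        (one_lt_one_div (by linarith) (by linarith)) hj
  _ = 1 - 2 * η := mul_div_cancel₀ _ (by linarith)

end Real

theorem Metric.closedBall_div_diff_closedBall_subset {X : Type*} [PseudoMetricSpace X] (x : X)
    {lam η r s : ℝ} (hr : 0 ≤ r) (hη : η < 1) (hs₀ : (1 - lam) * r ≤ s)
    (hs₁ : s ≤ (1 - 2 * η) * r) :
    closedBall x (s / (1 - η)) \ closedBall x s ⊆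
      closedBall x ((1 - η) * r) \ closedBall x ((1 - lam) * r) := by
  refine Set.sdiff_subset_sdiff (closedBall_subset_closedBall ?_) (closedBall_subset_closedBall hs₀)
  rw [div_le_iff₀ (by linarith)]
  nlinarith [mul_nonneg (sq_nonneg η) hr]

theorem stmt14_general {n : ℕ} (μ : Measure (EuclideanSpace ℝ (Fin n)))
    (x : EuclideanSpace ℝ (Fin n)) (r : ℝ) (hr : 0 < r)
    (E₁ E₂ : Set (EuclideanSpace ℝ (Fin n)))
    (lam η : ℝ) (hlam : lam ∈ Set.Ioo (0 : ℝ) 1) (hη : η ∈ Set.Ioo (0 : ℝ) 1)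
    (hle : 4 * η < lam)
    (M : ℕ) (hM : M = ⌈Real.log ((1 - 2 * η) / (1 - lam / 2)) / Real.log (1 / (1 - η))⌉₊) :
    (lam / (2 * η) - 2 ≤ (M : ℝ) ∧ (M : ℝ) ≤ lam / η + 1) ∧
    ∃ s : ℝ, (1 - lam / 2) * r ≤ s ∧ s ≤ (1 - 2 * η) * r ∧
      μ (closedBall x (s / (1 - η)) \ closedBall x s) ≤
        (3 / (M : ℝ≥0∞)) * μ (closedBall x ((1 - η) * r) \ closedBall x ((1 - lam) * r)) ∧
      μ (E₁ ∩ (closedBall x (s / (1 - η)) \ closedBall x s)) ≤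
        (3 / (M : ℝ≥0∞)) *
          μ (E₁ ∩ (closedBall x ((1 - η) * r) \ closedBall x ((1 - lam) * r))) ∧
      μ (E₂ ∩ (closedBall x (s / (1 - η)) \ closedBall x s)) ≤
        (3 / (M : ℝ≥0∞)) *
          μ (E₂ ∩ (closedBall x ((1 - η) * r) \ closedBall x ((1 - lam) * r))) := by
  obtain ⟨hlam0, hlam1⟩ := hlam
  obtain ⟨hη0, hη1⟩ := hη
  have hL := Real.log_div_log_one_div_one_sub_pos hη0 hle hlam1
  have hM0 : M ≠ 0 := hM ▸ (Nat.ceil_pos.2 hL).ne'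
  refine ⟨⟨(Real.le_log_div_log_one_div_one_sub hη0 hle hlam1).trans (hM ▸ Nat.le_ceil _), ?_⟩, ?_⟩
  · linarith [hM ▸ Nat.ceil_lt_add_one hL.le, Real.log_div_log_one_div_one_sub_le hη0 hle hlam1]
  set s : ℕ → ℝ := fun j => (1 - lam / 2) * r * (1 / (1 - η)) ^ j with hs
  have hs_succ j : s j / (1 - η) = s (j + 1) := by simp only [hs]; ring
  have hs_mono : Monotone s :=
    (pow_right_mono₀ (one_le_one_div (by linarith) (by linarith))).const_mul
      (mul_nonneg (by linarith) hr.le)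
  have hs_ge j : (1 - lam / 2) * r ≤ s j := by simpa [hs] using hs_mono (Nat.zero_le j)
  have hs_le j (hj : j < M) : s j ≤ (1 - 2 * η) * r := by
    simpa only [hs, mul_right_comm _ r] using mul_le_mul_of_nonneg_right
      (Real.pow_one_div_one_sub_le hη0 hle hlam1 (Nat.lt_ceil.1 (hM ▸ hj)).le) hr.le
  have hsub j (hj : j < M) := hs_succ j ▸ closedBall_div_diff_closedBall_subset x hr.le hη1
    (by nlinarith [hs_ge j] : (1 - lam) * r ≤ s j) (hs_le j hj)
  obtain ⟨j, hj, hgood⟩ := Measure.exists_forall_measure_le_of_pairwise_disjoint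
    ![μ, μ.restrict E₁, μ.restrict E₂] hM0
    (fun _ => measurableSet_closedBall.diff measurableSet_closedBall)
    (hs_mono.pairwise_disjoint_closedBall_diff_closedBall x) hsub
  have inter_eq_restrict E (a b : ℝ) : μ (E ∩ (closedBall x b \ closedBall x a)) =
      μ.restrict E (closedBall x b \ closedBall x a) := by
    rw [Measure.restrict_apply (measurableSet_closedBall.diff measurableSet_closedBall),
      Set.inter_comm]
  simp only [Fintype.card_fin] at hgood
  refine ⟨s j, hs_ge j, hs_le j hj, ?_, ?_, ?_⟩ <;>
    simp only [hs_succ, inter_eq_restrict]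
  exacts [hgood 0, hgood 1, hgood 2]

/-- Choice of a good annulus: with `M = ⌈log((1−2η)/(1−λ/2))/log(1/(1−η))⌉`, there is a radius
`(1−λ/2)r ≤ s ≤ (1−2η)r` such that the annulus `B(x,s/(1−η)) \ B(x,s)` carries at most a
`3/M`-fraction of the mass of `B(x,(1−η)r) \ B(x,(1−λ)r)`, for `μ` itself and for its
restrictions to `E₁` and `E₂`; moreover `λ/(2η) − 2 ≤ M ≤ λ/η + 1`. -/
theorem stmt14 {n k : ℕ} (μ : Measure (EuclideanSpace ℝ (Fin n))) (D : ℝ)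
    (hD : 0 < D) (hreg : IsADRegular μ k D)
    (x : EuclideanSpace ℝ (Fin n)) (hx : x ∈ msupport μ) (r : ℝ) (hr : 0 < r)
    (E₁ E₂ : Set (EuclideanSpace ℝ (Fin n))) (hE₁ : MeasurableSet E₁) (hE₂ : MeasurableSet E₂)
    (lam η : ℝ) (hlam : lam ∈ Set.Ioo (0 : ℝ) 1) (hη : η ∈ Set.Ioo (0 : ℝ) 1)
    (hle : 4 * η < lam)
    (M : ℕ) (hM : M = ⌈Real.log ((1 - 2 * η) / (1 - lam / 2)) / Real.log (1 / (1 - η))⌉₊) :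
    (lam / (2 * η) - 2 ≤ (M : ℝ) ∧ (M : ℝ) ≤ lam / η + 1) ∧
    ∃ s : ℝ, (1 - lam / 2) * r ≤ s ∧ s ≤ (1 - 2 * η) * r ∧
      μ (closedBall x (s / (1 - η)) \ closedBall x s) ≤
        (3 / (M : ℝ≥0∞)) * μ (closedBall x ((1 - η) * r) \ closedBall x ((1 - lam) * r)) ∧
      μ (E₁ ∩ (closedBall x (s / (1 - η)) \ closedBall x s)) ≤
        (3 / (M : ℝ≥0∞)) *
          μ (E₁ ∩ (closedBall x ((1 - η) * r) \ closedBall x ((1 - lam) * r))) ∧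
      μ (E₂ ∩ (closedBall x (s / (1 - η)) \ closedBall x s)) ≤
        (3 / (M : ℝ≥0∞)) *
          μ (E₂ ∩ (closedBall x ((1 - η) * r) \ closedBall x ((1 - lam) * r))) :=
  stmt14_general μ x r hr E₁ E₂ lam η hlam hη hle M hM
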